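/- As |x| → ∞, the Whitham kernel satisfies K(x) = (√2/(π√|x|)) exp(-π|x|/2) + O(|x|^{-3/2} exp(-π|x|/2)). -/

import Mathlib

noncomputable def whithamSeries (x : ℝ) : ℝ :=
  (1/Real.pi) * ∑' n : ℕ, ∫ s in ((2*(n:ℝ)+1)*Real.pi/2)..(((n:ℝ)+1)*Real.pi),
    Real.exp (-s*|x|) * Real.sqrt (|Real.tan s|/s)

/-!
Write `t = |x|`. On the `n`-th branch `s = (2n+1)π/2 + u` with `0 < u ≤ π/2` we have
`|tan s| = cot u ≤ 1/u` and `s ≥ π/2`, so the integrand is at most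
`exp (-(2n+1)πt/2) √(2/π) u^(-1/2)`; the branch is at most `2 exp (-(2n+1)πt/2)` and the
branches `n ≥ 1` together are `O(exp (-3πt/2))`.

On the first branch, `√(|tan s|/s) = √(2/π) u^(-1/2) + O(u^(1/2))` because
`cos u ≤ u cot u ≤ 1`. Comparing with the Gamma integrals
`∫₀^∞ u^(a-1) e^(-tu) du = Γ(a) t^(-a)` for `a = 1/2` and `a = 3/2` (Watson's lemma) gives
`√2 t^(-1/2) e^(-πt/2) + O(t^(-3/2) e^(-πt/2))` for that branch.
-/

open Real MeasureTheory Set Filter Asymptotics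

theorem abs_sqrt_sub_sqrt_le {a b : ℝ} (ha : 0 ≤ a) (hb : 0 < b) :
    |√a - √b| ≤ |a - b| / √b := by
  have hsum : 0 < √a + √b := by positivity
  have hprod : (√a - √b) * (√a + √b) = a - b := by
    rw [mul_comm, ← sq_sub_sq, Real.sq_sqrt ha, Real.sq_sqrt hb.le]
  rw [← hprod, abs_mul, abs_of_pos hsum, mul_div_assoc]
  exact le_mul_of_one_le_right (abs_nonneg _)
    ((one_le_div (Real.sqrt_pos.2 hb)).2 (le_add_of_nonneg_left (Real.sqrt_nonneg a)))

theorem rpow_one_half_sub_one {x : ℝ} (hx : 0 ≤ x) : x ^ ((1 : ℝ) / 2 - 1) = (√x)⁻¹ := by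
  rw [show (1 : ℝ) / 2 - 1 = -(1 / 2) by norm_num, rpow_neg hx, ← sqrt_eq_rpow]

theorem integral_inv_sqrt_sub {a b : ℝ} (hab : a ≤ b) :
    ∫ s in a..b, (√(s - a))⁻¹ = 2 * √(b - a) := by
  rw [intervalIntegral.integral_comp_sub_right (fun x => (√x)⁻¹), sub_self]
  have hsub : 0 ≤ b - a := sub_nonneg.2 hab
  rw [intervalIntegral.integral_congr (g := fun x => x ^ ((1 : ℝ) / 2 - 1)) fun x hx => by
      rw [uIcc_of_le hsub] at hx
      exact (rpow_one_half_sub_one hx.1).symm,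
    integral_rpow (Or.inl (by norm_num)), sqrt_eq_rpow]
  norm_num
  ring

theorem abs_integral_exp_neg_mul_sub_le {f : ℝ → ℝ} {a c M t : ℝ} (ha : 0 < a) (ht : 0 < t)
    (hf : AEStronglyMeasurable f (volume.restrict (Ioi 0)))
    (hfc : ∀ u > 0, |f u - c * u ^ (a - 1)| ≤ M * u ^ a) :
    |(∫ u in Ioi 0, exp (-(t * u)) * f u) - c * ((1 / t) ^ a * Gamma a)|
      ≤ M * ((1 / t) ^ (a + 1) * Gamma (a + 1)) := by
  have hGamma {b : ℝ} (hb : 0 < b) :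
      IntegrableOn (fun u => u ^ (b - 1) * exp (-(t * u))) (Ioi 0) :=
    .of_integral_ne_zero (by rw [integral_rpow_mul_exp_neg_mul_Ioi hb ht]; positivity)
  have hmain := hGamma ha
  have herr := hGamma (b := a + 1) (by linarith)
  simp only [add_sub_cancel_right] at herr
  have hbound : ∀ᵐ u ∂volume.restrict (Ioi 0),
      ‖exp (-(t * u)) * f u - c * (u ^ (a - 1) * exp (-(t * u)))‖ ≤
        M * (u ^ a * exp (-(t * u))) := by
    filter_upwards [ae_restrict_mem measurableSet_Ioi] with u hu
    rw [Real.norm_eq_abs, show exp (-(t * u)) * f u - c * (u ^ (a - 1) * exp (-(t * u)))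
      = exp (-(t * u)) * (f u - c * u ^ (a - 1)) by ring, abs_mul, abs_of_pos (exp_pos _)]
    nlinarith [hfc u hu, exp_pos (-(t * u))]
  have hdiff : IntegrableOn
      (fun u => exp (-(t * u)) * f u - c * (u ^ (a - 1) * exp (-(t * u)))) (Ioi 0) :=
    (herr.const_mul M).mono'
      (((by fun_prop : Continuous fun u => exp (-(t * u))).aestronglyMeasurable.mul hf).sub
        (hmain.aestronglyMeasurable.const_mul c)) hbound
  have hf_int : IntegrableOn (fun u => exp (-(t * u)) * f u) (Ioi 0) :=
    (hdiff.add (hmain.const_mul c)).congr_fun (fun u _ => sub_add_cancel _ _) measurableSet_Ioi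
  have hGamma_succ := integral_rpow_mul_exp_neg_mul_Ioi (by linarith : 0 < a + 1) ht
  simp only [add_sub_cancel_right] at hGamma_succ
  calc |(∫ u in Ioi 0, exp (-(t * u)) * f u) - c * ((1 / t) ^ a * Gamma a)|
      = ‖∫ u in Ioi 0, (exp (-(t * u)) * f u - c * (u ^ (a - 1) * exp (-(t * u))))‖ := by
        rw [integral_sub hf_int (hmain.const_mul c), integral_const_mul,
          integral_rpow_mul_exp_neg_mul_Ioi ha ht, Real.norm_eq_abs]
    _ ≤ ∫ u in Ioi 0, M * (u ^ a * exp (-(t * u))) :=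
        norm_integral_le_of_norm_le (herr.const_mul M) hbound
    _ = M * ((1 / t) ^ (a + 1) * Gamma (a + 1)) := by rw [integral_const_mul, hGamma_succ]

namespace Real

theorem measurable_tan : Measurable tan := by
  rw [show tan = fun x => sin x / cos x from funext tan_eq_sin_div_cos]
  exact measurable_sin.div measurable_cos

-- `(tan u)⁻¹` stands for `cot u`: with the junk value `tan (π / 2) = 0` the identities and
-- bounds below stay correct at the poles of `tan` and `cot`.
theorem tan_pi_div_two_add (u : ℝ) : tan (π / 2 + u) = -(tan u)⁻¹ := by
  rw [← sub_neg_eq_add, tan_pi_div_two_sub, tan_neg, inv_neg]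

theorem abs_tan_odd_mul_pi_div_two_add (n : ℕ) (u : ℝ) :
    |tan ((2 * n + 1) * π / 2 + u)| = |tan u|⁻¹ := by
  rw [show (2 * n + 1) * π / 2 + u = π / 2 + u + n * π by ring, tan_add_nat_mul_pi,
    tan_pi_div_two_add, abs_neg, abs_inv]

theorem inv_abs_tan_le_inv {u : ℝ} (hu₀ : 0 < u) (hu : u ≤ π / 2) :
    |tan u|⁻¹ ≤ u⁻¹ := by
  rcases hu.lt_or_eq with hu | rfl
  · exact inv_anti₀ hu₀ ((le_tan hu₀.le hu).trans (le_abs_self _))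
  · rw [tan_pi_div_two, abs_zero, inv_zero]
    positivity

theorem cos_le_mul_inv_abs_tan {u : ℝ} (hu₀ : 0 < u) (hu : u ≤ π / 2) :
    cos u ≤ u * |tan u|⁻¹ := by
  have hsin : 0 < sin u := sin_pos_of_pos_of_lt_pi hu₀ (by linarith [pi_pos])
  have hcos : 0 ≤ cos u := cos_nonneg_of_neg_pi_div_two_le_of_le (by linarith [pi_pos]) hu
  rw [tan_eq_sin_div_cos, abs_div, inv_div, abs_of_pos hsin, abs_of_nonneg hcos,
    mul_div_assoc', le_div_iff₀ hsin]
  exact (mul_le_mul_of_nonneg_left (sin_le hu₀.le) hcos).trans_eq (mul_comm _ _)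

end Real

theorem abs_mul_inv_abs_tan_div_sub_le {u : ℝ} (hu₀ : 0 < u) (hu : u ≤ π / 2) :
    |u * |tan u|⁻¹ / (π / 2 + u) - 2 / π| ≤ u := by
  have hπ : 3 < π := pi_gt_three
  have hπ₀ := pi_pos
  have hlo := (one_sub_sq_div_two_le_cos (x := u)).trans (cos_le_mul_inv_abs_tan hu₀ hu)
  have hhi : u * |tan u|⁻¹ ≤ 1 :=
    (mul_le_mul_of_nonneg_left (inv_abs_tan_le_inv hu₀ hu) hu₀.le).trans_eq
      (mul_inv_cancel₀ hu₀.ne')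
  rw [div_sub_div _ _ (by positivity) (by positivity), abs_div,
    abs_of_pos (show 0 < (π / 2 + u) * π by positivity), div_le_iff₀ (by positivity), abs_le]
  generalize u * |tan u|⁻¹ = k at hlo hhi ⊢
  constructor
  · nlinarith [mul_nonneg (sub_nonneg.2 hlo) hπ₀.le, mul_pos (mul_pos hu₀ hu₀) hπ₀,
      mul_pos (mul_pos hu₀ hπ₀) (sub_pos.2 hπ), mul_pos hu₀ (sub_pos.2 hπ)]
  · nlinarith [mul_nonneg (sub_nonneg.2 hhi) hπ₀.le, mul_pos (mul_pos hu₀ hu₀) hπ₀,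
      mul_pos (mul_pos hu₀ hπ₀) hπ₀]

theorem abs_sqrt_abs_tan_pi_div_two_add_div_sub_le {u : ℝ} (hu₀ : 0 < u) (hu : u ≤ π / 2) :
    |√(|tan (π / 2 + u)| / (π / 2 + u)) - √(2 / π) / √u| ≤ 2 * √u := by
  have hsu : 0 < √u := Real.sqrt_pos.2 hu₀
  have hc : 1 / 2 ≤ √(2 / π) := by
    rw [Real.le_sqrt (by norm_num) (by positivity), le_div_iff₀ pi_pos]
    linarith [pi_lt_four]
  have hsplit :
      √(|tan (π / 2 + u)| / (π / 2 + u)) = √(u * |tan u|⁻¹ / (π / 2 + u)) / √u := by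
    rw [tan_pi_div_two_add, abs_neg, abs_inv, ← Real.sqrt_div' _ hu₀.le]
    congr 1
    field_simp
  rw [hsplit, ← sub_div, abs_div, abs_of_pos hsu, div_le_iff₀ hsu, mul_assoc,
    Real.mul_self_sqrt hu₀.le]
  calc |√(u * |tan u|⁻¹ / (π / 2 + u)) - √(2 / π)|
      ≤ |u * |tan u|⁻¹ / (π / 2 + u) - 2 / π| / √(2 / π) :=
        abs_sqrt_sub_sqrt_le (by positivity) (by positivity)
    _ ≤ u / (1 / 2) :=
        div_le_div₀ hu₀.le (abs_mul_inv_abs_tan_div_sub_le hu₀ hu) (by norm_num) hc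
    _ = 2 * u := by ring

theorem sqrt_abs_tan_div_le {n : ℕ} {s : ℝ} (h₁ : (2 * (n : ℝ) + 1) * π / 2 < s)
    (h₂ : s ≤ ((n : ℝ) + 1) * π) :
    √(|tan s| / s) ≤ √(2 / π) / √(s - (2 * (n : ℝ) + 1) * π / 2) := by
  have hu₀ := sub_pos.2 h₁
  have hπ2 : π / 2 ≤ s := by nlinarith [pi_pos, (Nat.cast_nonneg n : (0 : ℝ) ≤ n)]
  have htan : |tan s| ≤ (s - (2 * (n : ℝ) + 1) * π / 2)⁻¹ := by
    have := abs_tan_odd_mul_pi_div_two_add n (s - (2 * (n : ℝ) + 1) * π / 2)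
    rw [add_sub_cancel] at this
    exact this.trans_le (inv_abs_tan_le_inv hu₀ (by linarith))
  rw [← Real.sqrt_div' _ hu₀.le]
  refine Real.sqrt_le_sqrt ((div_le_div₀ (by positivity) htan (by positivity) hπ2).trans_eq ?_)
  field_simp

noncomputable def whithamBranch (t : ℝ) (n : ℕ) : ℝ :=
  ∫ s in ((2 * (n : ℝ) + 1) * π / 2)..(((n : ℝ) + 1) * π), exp (-s * t) * √(|tan s| / s)

theorem whithamSeries_eq (x : ℝ) : whithamSeries x = 1 / π * ∑' n, whithamBranch |x| n := rfl

theorem whithamBranch_nonneg (t : ℝ) (n : ℕ) : 0 ≤ whithamBranch t n :=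
  intervalIntegral.integral_nonneg (by nlinarith [pi_pos, (Nat.cast_nonneg n : (0 : ℝ) ≤ n)])
    fun _ _ => mul_nonneg (exp_pos _).le (Real.sqrt_nonneg _)

theorem whithamBranch_le {t : ℝ} (ht : 0 ≤ t) (n : ℕ) :
    whithamBranch t n ≤ 2 * exp (-((2 * (n : ℝ) + 1) * π / 2 * t)) := by
  set a := (2 * (n : ℝ) + 1) * π / 2
  have hb : ((n : ℝ) + 1) * π = a + π / 2 := by ring
  have hπ := pi_pos
  have hab : a ≤ a + π / 2 := by linarith
  have hint : IntervalIntegrable (fun s => exp (-(a * t)) * (√(2 / π) * (√(s - a))⁻¹))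
      volume a (a + π / 2) := by
    refine intervalIntegral.intervalIntegrable_of_integral_ne_zero ?_
    rw [intervalIntegral.integral_const_mul, intervalIntegral.integral_const_mul,
      integral_inv_sqrt_sub hab, add_sub_cancel_left]
    positivity
  have hbound : ∀ᵐ s ∂volume, s ∈ Ioc a (a + π / 2) →
      ‖exp (-s * t) * √(|tan s| / s)‖ ≤
        exp (-(a * t)) * (√(2 / π) * (√(s - a))⁻¹) := by
    refine ae_of_all _ fun s hs => ?_
    rw [Real.norm_of_nonneg (by positivity)]
    refine mul_le_mul (exp_le_exp.2 (by nlinarith [hs.1])) ?_ (by positivity) (by positivity)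
    exact (sqrt_abs_tan_div_le hs.1 (hb ▸ hs.2)).trans_eq (div_eq_mul_inv _ _)
  have hsqrt : √(2 / π) * √(π / 2) = 1 := by
    rw [← Real.sqrt_mul (by positivity), div_mul_div_comm, mul_comm 2 π,
      div_self (by positivity), Real.sqrt_one]
  calc whithamBranch t n = ‖∫ s in a..a + π / 2, exp (-s * t) * √(|tan s| / s)‖ := by
        rw [whithamBranch, hb, Real.norm_of_nonneg (hb ▸ whithamBranch_nonneg t n)]
    _ ≤ ∫ s in a..a + π / 2, exp (-(a * t)) * (√(2 / π) * (√(s - a))⁻¹) :=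
        intervalIntegral.norm_integral_le_of_norm_le hab hbound hint
    _ = 2 * exp (-(a * t)) := by
        rw [intervalIntegral.integral_const_mul, intervalIntegral.integral_const_mul,
          integral_inv_sqrt_sub hab, add_sub_cancel_left]
        linear_combination 2 * exp (-(a * t)) * hsqrt

theorem whithamBranch_succ_le {t : ℝ} (ht : 1 ≤ t) (n : ℕ) :
    whithamBranch t (n + 1) ≤ 2 * exp (-(3 * π / 2 * t)) * exp (-π) ^ n := by
  refine (whithamBranch_le (by linarith) (n + 1)).trans ?_
  rw [mul_assoc, ← exp_nat_mul, ← exp_add, Nat.cast_succ]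
  gcongr
  nlinarith [mul_nonneg (mul_nonneg (Nat.cast_nonneg n : (0 : ℝ) ≤ n) pi_pos.le)
    (sub_nonneg.2 ht)]

theorem summable_whithamBranch_succ {t : ℝ} (ht : 1 ≤ t) :
    Summable fun n => whithamBranch t (n + 1) :=
  .of_nonneg_of_le (fun n => whithamBranch_nonneg t (n + 1)) (whithamBranch_succ_le ht)
    ((summable_geometric_of_lt_one (exp_pos _).le
      (exp_lt_one_iff.2 (neg_neg_of_pos pi_pos))).mul_left _)

theorem isBigO_tsum_whithamBranch_succ :
    (fun t => ∑' n, whithamBranch t (n + 1)) =O[atTop]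
      fun t => t ^ (-(3 : ℝ) / 2) * exp (-π * t / 2) := by
  have hgeom := summable_geometric_of_lt_one (exp_pos _).le
    (exp_lt_one_iff.2 (neg_neg_of_pos pi_pos))
  have htail : (fun t => ∑' n, whithamBranch t (n + 1)) =O[atTop]
      fun t => exp (-π * t) * exp (-π * t / 2) := by
    refine .of_bound (2 * ∑' n : ℕ, exp (-π) ^ n) ((eventually_ge_atTop 1).mono fun t ht => ?_)
    rw [Real.norm_of_nonneg (tsum_nonneg fun n => whithamBranch_nonneg t (n + 1)),
      Real.norm_of_nonneg (by positivity), ← exp_add]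
    calc ∑' n, whithamBranch t (n + 1)
        ≤ ∑' n : ℕ, 2 * exp (-(3 * π / 2 * t)) * exp (-π) ^ n :=
          (summable_whithamBranch_succ ht).tsum_le_tsum (whithamBranch_succ_le ht)
            (hgeom.mul_left _)
      _ = 2 * (∑' n : ℕ, exp (-π) ^ n) * exp (-π * t + -π * t / 2) := by
          rw [tsum_mul_left]; ring_nf
  exact htail.trans ((isLittleO_exp_neg_mul_rpow_atTop pi_pos _).isBigO.mul (isBigO_refl _ _))

theorem whithamBranch_zero_eq (t : ℝ) :
    whithamBranch t 0 = exp (-(π / 2 * t)) *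
      ∫ u in Ioi 0, exp (-(t * u)) *
        (Iic (π / 2)).indicator (fun u => √(|tan (π / 2 + u)| / (π / 2 + u))) u := by
  have hshift := intervalIntegral.integral_comp_add_left
    (fun s => exp (-s * t) * √(|tan s| / s)) (π / 2) (a := 0) (b := π / 2)
  rw [add_zero, add_halves] at hshift
  rw [show (fun u => exp (-(t * u)) *
      (Iic (π / 2)).indicator (fun u => √(|tan (π / 2 + u)| / (π / 2 + u))) u) =
      (Iic (π / 2)).indicator (fun u => exp (-(t * u)) * √(|tan (π / 2 + u)| / (π / 2 + u)))
      from funext fun u => (indicator_mul_right _ (fun u => exp (-(t * u))) _).symm]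
  simp only [setIntegral_indicator measurableSet_Iic, Ioi_inter_Iic,
    ← intervalIntegral.integral_of_le pi_div_two_pos.le, ← intervalIntegral.integral_const_mul]
  simp only [whithamBranch, Nat.cast_zero, mul_zero, zero_add, one_mul, ← hshift]
  congr 1 with u
  rw [← mul_assoc, ← exp_add]
  ring_nf

theorem abs_whithamBranch_zero_sub_le {t : ℝ} (ht : 0 < t) :
    |whithamBranch t 0 - √2 / √t * exp (-π * t / 2)| ≤
      √π * (t ^ (-(3 : ℝ) / 2) * exp (-π * t / 2)) := by
  set φ : ℝ → ℝ := fun u => √(|tan (π / 2 + u)| / (π / 2 + u))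
  have hφ_meas : Measurable ((Iic (π / 2)).indicator φ) :=
    (((measurable_tan.comp (measurable_const.add measurable_id)).abs.div
      (measurable_const.add measurable_id)).sqrt).indicator measurableSet_Iic
  have hφ : ∀ u > 0, |(Iic (π / 2)).indicator φ u - √(2 / π) * u ^ ((1 : ℝ) / 2 - 1)| ≤
      2 * u ^ ((1 : ℝ) / 2) := by
    intro u hu
    rw [rpow_one_half_sub_one hu.le, ← sqrt_eq_rpow, ← div_eq_mul_inv]
    by_cases hu' : u ≤ π / 2
    · rw [indicator_of_mem (show u ∈ Iic (π / 2) from hu')]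
      exact abs_sqrt_abs_tan_pi_div_two_add_div_sub_le hu hu'
    · have hc : √(2 / π) ≤ 1 :=
        Real.sqrt_le_one.2 ((div_le_one pi_pos).2 (by linarith [pi_gt_three]))
      rw [indicator_of_notMem (show u ∉ Iic (π / 2) from hu'), zero_sub, abs_neg,
        abs_of_nonneg (by positivity), div_le_iff₀ (Real.sqrt_pos.2 hu), mul_assoc,
        Real.mul_self_sqrt hu.le]
      linarith [pi_gt_three]
  have hWatson :=
    abs_integral_exp_neg_mul_sub_le (by norm_num) ht hφ_meas.aestronglyMeasurable hφ
  have hGamma : Gamma (1 / 2 + 1) = √π / 2 := by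
    rw [Gamma_add_one (by norm_num), Gamma_one_half_eq]; ring
  have hhalf : (1 / t) ^ ((1 : ℝ) / 2) = 1 / √t := by
    rw [← sqrt_eq_rpow, Real.sqrt_div' _ ht.le, Real.sqrt_one]
  have hthree : (1 / t) ^ ((1 : ℝ) / 2 + 1) = t ^ (-(3 : ℝ) / 2) := by
    rw [one_div, inv_rpow ht.le, ← rpow_neg ht.le]; norm_num
  have hsqrt : √(2 / π) * √π = √2 := by
    rw [← Real.sqrt_mul (by positivity), div_mul_cancel₀ _ pi_pos.ne']
  rw [hGamma, hhalf, hthree, Gamma_one_half_eq] at hWatson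
  rw [whithamBranch_zero_eq, show -π * t / 2 = -(π / 2 * t) by ring, ← hsqrt]
  calc |exp (-(π / 2 * t)) * (∫ u in Ioi 0, exp (-(t * u)) * (Iic (π / 2)).indicator φ u) -
        √(2 / π) * √π / √t * exp (-(π / 2 * t))|
      = exp (-(π / 2 * t)) * |(∫ u in Ioi 0, exp (-(t * u)) * (Iic (π / 2)).indicator φ u) -
          √(2 / π) * (1 / √t * √π)| := by
        rw [← abs_of_pos (exp_pos (-(π / 2 * t))), ← abs_mul, abs_of_pos (exp_pos _)]
        ring_nf
    _ ≤ exp (-(π / 2 * t)) * (2 * (t ^ (-(3 : ℝ) / 2) * (√π / 2))) := by gcongr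
    _ = √π * (t ^ (-(3 : ℝ) / 2) * exp (-(π / 2 * t))) := by ring

theorem isBigO_tsum_whithamBranch_sub :
    (fun t => ∑' n, whithamBranch t n - √2 / √t * exp (-π * t / 2)) =O[atTop]
      fun t => t ^ (-(3 : ℝ) / 2) * exp (-π * t / 2) := by
  have hmain : (fun t => whithamBranch t 0 - √2 / √t * exp (-π * t / 2)) =O[atTop]
      fun t => t ^ (-(3 : ℝ) / 2) * exp (-π * t / 2) :=
    .of_bound √π ((eventually_gt_atTop 0).mono fun t ht => by
      simpa only [Real.norm_eq_abs,
        abs_of_pos (by positivity : 0 < t ^ (-(3 : ℝ) / 2) * exp (-π * t / 2))]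
        using abs_whithamBranch_zero_sub_le ht)
  refine (hmain.add isBigO_tsum_whithamBranch_succ).congr' ?_ EventuallyEq.rfl
  filter_upwards [eventually_ge_atTop 1] with t ht
  rw [((summable_nat_add_iff 1).1 (summable_whithamBranch_succ ht)).tsum_eq_zero_add]
  ring

theorem whitham_kernel_asymptotics :
    Asymptotics.IsBigO (Filter.cocompact ℝ)
      (fun x : ℝ => whithamSeries x
        - Real.sqrt 2/(Real.pi*Real.sqrt |x|) * Real.exp (-Real.pi*|x|/2))
      (fun x : ℝ => |x| ^ (-(3:ℝ)/2) * Real.exp (-Real.pi*|x|/2)) := by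
  refine ((isBigO_tsum_whithamBranch_sub.comp_tendsto
    (tendsto_norm_cocompact_atTop (E := ℝ))).const_mul_left (1 / π)).congr_left fun x => ?_
  rw [whithamSeries_eq]
  simp only [Function.comp_apply, Real.norm_eq_abs]
  ring
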